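/- arXiv:1606.07522 — 4 statements merged into one kernel-verified Lean document; each statement's English description precedes it below -/
import Mathlib

section
/- If ⪯_w is a well-founded total preorder on W_w and Γ is finite, then the maximal-superset relation ⊑_w^Γ is well-founded on W_w. -/
open Set

/-- Minimal elements of `S` within domain `D` w.r.t. the strict part of `r`. -/
def minOnRel {W : Type*} (r : W → W → Prop) (D S : Set W) : Set W :=
  {v | v ∈ S ∩ D ∧ ∀ u ∈ S ∩ D, ¬ (r u v ∧ ¬ r v u)}

/-- The set of formulas in `Γ` on whose truth `u` agrees with `w`. -/
def agreeSet {W F : Type*} (sat : W → F → Prop) (Γ : Set F) (w u : W) : Set F :=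
  {γ ∈ Γ | (sat u γ ↔ sat w γ)}

/-- `[w]_Γ`: worlds of `Ww` agreeing with `w` on every formula of `Γ`. -/
def cpCls {W F : Type*} (sat : W → F → Prop) (Γ : Set F) (Ww : Set W) (w : W) : Set W :=
  {u ∈ Ww | ∀ γ ∈ Γ, (sat u γ ↔ sat w γ)}

/-- `⊴_w^Γ`: the restriction of `pre` to `[w]_Γ`. -/
def cpRel {W F : Type*} (sat : W → F → Prop) (Γ : Set F) (Ww : Set W)
    (pre : W → W → Prop) (w : W) (u v : W) : Prop :=
  u ∈ cpCls sat Γ Ww w ∧ v ∈ cpCls sat Γ Ww w ∧ pre u v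

/-- The restriction of a relation `pre` to a subset `A`. -/
def restrictRel {W : Type*} (A : Set W) (pre : W → W → Prop) (u v : W) : Prop :=
  u ∈ A ∧ v ∈ A ∧ pre u v

/-- `⪯_w^Γ`: the naive-counting relation. -/
def ncRel {W F : Type*} (sat : W → F → Prop) (Γ : Finset F)
    (pre : W → W → Prop) (w : W) (u v : W) : Prop :=
  (agreeSet sat (↑Γ) w u).ncard > (agreeSet sat (↑Γ) w v).ncard ∨
    ((agreeSet sat (↑Γ) w u).ncard = (agreeSet sat (↑Γ) w v).ncard ∧ pre u v)

/-- `⊑_w^Γ`: the maximal-superset relation. -/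
def msRel {W F : Type*} (sat : W → F → Prop) (Γ : Set F)
    (pre : W → W → Prop) (w : W) (u v : W) : Prop :=
  agreeSet sat Γ w v ⊂ agreeSet sat Γ w u ∨
    (agreeSet sat Γ w v = agreeSet sat Γ w u ∧ pre u v)

/-!
Agreement sets are subsets of the finite set `Γ`, so on a nonempty `S` some world `v` has an
agreement set that is `⊆`-maximal among those of `S`; taking `v` moreover `pre`-minimal among the
worlds of `S` with that same agreement set makes it minimal for the strict part of `⊑_w^Γ`.
-/

theorem agreeSet_subset {W F : Type*} (sat : W → F → Prop) (Γ : Set F) (w u : W) :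
    agreeSet sat Γ w u ⊆ Γ :=
  sep_subset _ _

theorem finite_image_agreeSet {W F : Type*} (sat : W → F → Prop) {Γ : Set F} (hΓ : Γ.Finite)
    (w : W) (S : Set W) : (agreeSet sat Γ w '' S).Finite :=
  hΓ.finite_subsets.subset <| image_subset_iff.2 fun u _ => agreeSet_subset sat Γ w u

theorem exists_lex_minimal_of_finite_image {W α : Type*} [PartialOrder α] (f : W → α)
    (r : W → W → Prop) {D S : Set W}
    (hr : ∀ T ⊆ D, T.Nonempty → ∃ v ∈ T, ∀ u ∈ T, ¬ (r u v ∧ ¬ r v u))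
    (hSD : S ⊆ D) (hS : S.Nonempty) (hfin : (f '' S).Finite) :
    ∃ v ∈ S, ∀ u ∈ S, ¬ f v < f u ∧ (f u = f v → r u v → r v u) := by
  obtain ⟨i, hi⟩ := hfin.exists_maximalFor' f S hS
  obtain ⟨v, ⟨hvS, hvi⟩, hv⟩ :=
    hr {u ∈ S | f u = f i} (fun u hu => hSD hu.1) ⟨i, hi.prop, rfl⟩
  refine ⟨v, hvS, fun u hu => ⟨hvi ▸ hi.not_gt hu, fun huv hruv => ?_⟩⟩
  by_contra hrvu
  exact hv u ⟨hu, huv.trans hvi⟩ ⟨hruv, hrvu⟩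

theorem msRel_wellFounded_general {W F : Type*} (sat : W → F → Prop) (Γ : Finset F)
    (Ww : Set W) (pre : W → W → Prop) (w : W)
    (hwf : ∀ S : Set W, S ⊆ Ww → S.Nonempty →
      ∃ v ∈ S, ∀ u ∈ S, ¬ (pre u v ∧ ¬ pre v u)) :
    ∀ S : Set W, S ⊆ Ww → S.Nonempty →
      ∃ v ∈ S, ∀ u ∈ S,
        ¬ (msRel sat (↑Γ) pre w u v ∧ ¬ msRel sat (↑Γ) pre w v u) := by
  intro S hSW hS
  obtain ⟨v, hvS, hv⟩ := exists_lex_minimal_of_finite_image (agreeSet sat (↑Γ) w) pre hwf hSW hS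
    (finite_image_agreeSet sat Γ.finite_toSet w S)
  refine ⟨v, hvS, fun u huS ⟨huv, hvu⟩ => ?_⟩
  rcases huv with hlt | ⟨heq, hpre⟩
  · exact (hv u huS).1 hlt
  · exact hvu (Or.inr ⟨heq.symm, (hv u huS).2 heq.symm hpre⟩)

theorem msRel_wellFounded {W F : Type*} (sat : W → F → Prop) (Γ : Finset F)
    (Ww : Set W) (pre : W → W → Prop) (w : W)
    (hrefl : ∀ u ∈ Ww, pre u u)
    (htrans : ∀ u ∈ Ww, ∀ v ∈ Ww, ∀ x ∈ Ww, pre u v → pre v x → pre u x)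
    (htot : ∀ u ∈ Ww, ∀ v ∈ Ww, pre u v ∨ pre v u)
    (hwf : ∀ S : Set W, S ⊆ Ww → S.Nonempty →
      ∃ v ∈ S, ∀ u ∈ S, ¬ (pre u v ∧ ¬ pre v u)) :
    ∀ S : Set W, S ⊆ Ww → S.Nonempty →
      ∃ v ∈ S, ∀ u ∈ S,
        ¬ (msRel sat (↑Γ) pre w u v ∧ ¬ msRel sat (↑Γ) pre w v u) :=
  msRel_wellFounded_general sat Γ Ww pre w hwf
end

section
/- If ⟦φ⟧ ∩ [w]_Γ is nonempty, then Min_{⪯_w^Γ}(⟦φ⟧) = Min_{⊴_w^Γ}(⟦φ⟧), i.e., when some φ-world fully agrees with w on Γ, the naive-counting minimal φ-worlds are exactly the strict-agreement minimal φ-worlds. -/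
open Set

/-!
A world `u` agrees with `w` on at most `|Γ|` formulas of `Γ`, with equality exactly on `[w]_Γ`.
So when some `φ`-world lies in `[w]_Γ`, the agreement count is maximal there and every world
outside `[w]_Γ` is strictly beaten on the first lexicographic component; among worlds of maximal
count the naive-counting order is just `⪯_w`, i.e. `⊴_w^Γ`.
-/

def keyLexRel {W α : Type*} [PartialOrder α] (f : W → α) (pre : W → W → Prop) (u v : W) : Prop :=
  f u > f v ∨ (f u = f v ∧ pre u v)

section KeyLex

variable {W α : Type*} [PartialOrder α] {f : W → α} {N : α} {pre : W → W → Prop} {D T : Set W}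

theorem keyLexRel_strict_iff_restrictRel_strict (hf : ∀ u ∈ D, f u ≤ N)
    (hT : ∀ u, u ∈ T ↔ u ∈ D ∧ f u = N) {u v : W} (hu : u ∈ D) (hv : v ∈ T) :
    (keyLexRel f pre u v ∧ ¬ keyLexRel f pre v u) ↔
      (restrictRel T pre u v ∧ ¬ restrictRel T pre v u) := by
  have hfv : f v = N := ((hT v).1 hv).2
  have hlex : keyLexRel f pre u v ↔ u ∈ T ∧ pre u v := by
    rw [hT, keyLexRel, hfv]
    have := hf u hu
    constructor
    · rintro (hlt | ⟨heq, hpre⟩)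
      · exact absurd hlt (not_lt_of_ge this)
      · exact ⟨⟨hu, heq⟩, hpre⟩
    · rintro ⟨⟨-, heq⟩, hpre⟩
      exact Or.inr ⟨heq, hpre⟩
  constructor
  · rintro ⟨huv, hvu⟩
    obtain ⟨huT, hpre⟩ := hlex.1 huv
    have hfu : f u = f v := by rw [((hT u).1 huT).2, hfv]
    exact ⟨⟨huT, hv, hpre⟩, fun ⟨_, _, h⟩ => hvu (Or.inr ⟨hfu.symm, h⟩)⟩
  · rintro ⟨⟨huT, -, hpre⟩, hvu⟩
    refine ⟨hlex.2 ⟨huT, hpre⟩, ?_⟩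
    rintro (hlt | ⟨-, h⟩)
    · exact hlt.ne (by rw [((hT u).1 huT).2, hfv])
    · exact hvu ⟨hv, huT, h⟩

theorem mem_of_mem_minOnRel_keyLexRel (hf : ∀ u ∈ D, f u ≤ N)
    (hT : ∀ u, u ∈ T ↔ u ∈ D ∧ f u = N) {S : Set W} (hne : (S ∩ T).Nonempty) {v : W}
    (hv : v ∈ minOnRel (keyLexRel f pre) D S) : v ∈ T := by
  obtain ⟨⟨hvS, hvD⟩, hmin⟩ := hv
  obtain ⟨p, hpS, hpT⟩ := hne
  obtain ⟨hpD, hfp⟩ := (hT p).1 hpT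
  refine (hT v).2 ⟨hvD, ?_⟩
  by_contra hne
  have hlt : f v < f p := hfp ▸ lt_of_le_of_ne (hf v hvD) hne
  exact hmin p ⟨hpS, hpD⟩ ⟨Or.inl hlt, by
    rintro (h | ⟨h, -⟩)
    · exact lt_asymm hlt h
    · exact hlt.ne h⟩

theorem minOnRel_keyLexRel_eq (hf : ∀ u ∈ D, f u ≤ N) (hT : ∀ u, u ∈ T ↔ u ∈ D ∧ f u = N)
    {S : Set W} (hne : (S ∩ T).Nonempty) :
    minOnRel (keyLexRel f pre) D S = minOnRel (restrictRel T pre) T S := by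
  ext v
  constructor
  · intro hv
    have hvT := mem_of_mem_minOnRel_keyLexRel hf hT hne hv
    refine ⟨⟨hv.1.1, hvT⟩, fun u ⟨huS, huT⟩ hstrict => ?_⟩
    have huD := ((hT u).1 huT).1
    exact hv.2 u ⟨huS, huD⟩ ((keyLexRel_strict_iff_restrictRel_strict hf hT huD hvT).2 hstrict)
  · rintro ⟨⟨hvS, hvT⟩, hmin⟩
    refine ⟨⟨hvS, ((hT v).1 hvT).1⟩, fun u ⟨huS, huD⟩ hstrict => ?_⟩
    have hres := (keyLexRel_strict_iff_restrictRel_strict hf hT huD hvT).1 hstrict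
    exact hmin u ⟨huS, hres.1.1⟩ hres

end KeyLex

section Agreement

variable {W F : Type*} (sat : W → F → Prop) (w u : W)

theorem ncard_agreeSet_le (Γ : Finset F) : (agreeSet sat (↑Γ) w u).ncard ≤ Γ.card := by
  rw [← ncard_coe_finset]
  exact ncard_le_ncard (sep_subset _ _) Γ.finite_toSet

theorem ncard_agreeSet_eq_card_iff (Γ : Finset F) :
    (agreeSet sat (↑Γ) w u).ncard = Γ.card ↔ ∀ γ ∈ Γ, (sat u γ ↔ sat w γ) := by
  rw [← ncard_coe_finset]
  constructor
  · intro h γ hγ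
    have hall : agreeSet sat (↑Γ) w u = ↑Γ :=
      eq_of_subset_of_ncard_le (sep_subset _ _) h.ge Γ.finite_toSet
    exact (hall.ge hγ).2
  · intro h
    congr 1
    exact (sep_subset _ _).antisymm fun γ hγ => ⟨hγ, h γ hγ⟩

theorem mem_cpCls_iff_ncard_agreeSet (Γ : Finset F) (Ww : Set W) :
    u ∈ cpCls sat (↑Γ) Ww w ↔ u ∈ Ww ∧ (agreeSet sat (↑Γ) w u).ncard = Γ.card := by
  rw [ncard_agreeSet_eq_card_iff]
  rfl

end Agreement

theorem nc_min_eq_cp_min_general {W F : Type*} (sat : W → F → Prop) (Γ : Finset F)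
    (Ww : Set W) (pre : W → W → Prop) (w : W) (P : Set W)
    (hne : (P ∩ cpCls sat (↑Γ) Ww w).Nonempty) :
    minOnRel (ncRel sat Γ pre w) Ww P =
      minOnRel (cpRel sat (↑Γ) Ww pre w) (cpCls sat (↑Γ) Ww w) P :=
  minOnRel_keyLexRel_eq (f := fun u => (agreeSet sat (↑Γ) w u).ncard)
    (fun u _ => ncard_agreeSet_le sat w u Γ)
    (fun u => mem_cpCls_iff_ncard_agreeSet sat w u Γ Ww) hne

theorem nc_min_eq_cp_min {W F : Type*} (sat : W → F → Prop) (Γ : Finset F)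
    (Ww : Set W) (pre : W → W → Prop) (w : W) (P : Set W)
    (hrefl : ∀ u ∈ Ww, pre u u)
    (htrans : ∀ u ∈ Ww, ∀ v ∈ Ww, ∀ x ∈ Ww, pre u v → pre v x → pre u x)
    (htot : ∀ u ∈ Ww, ∀ v ∈ Ww, pre u v ∨ pre v u)
    (hwf : ∀ S : Set W, S ⊆ Ww → S.Nonempty →
      ∃ v ∈ S, ∀ u ∈ S, ¬ (pre u v ∧ ¬ pre v u))
    (hne : (P ∩ cpCls sat (↑Γ) Ww w).Nonempty) :
    minOnRel (ncRel sat Γ pre w) Ww P =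
      minOnRel (cpRel sat (↑Γ) Ww pre w) (cpCls sat (↑Γ) Ww w) P :=
  nc_min_eq_cp_min_general sat Γ Ww pre w P hne
end

section
/- Sufficiency of witnesses for clause extension (NC): if w satisfies ±α, and there exists a ⪯_w^Γ-minimal φ-world u satisfying ψ with u also satisfying ±α (the same polarity as w), then w satisfies ⟨φ, Γ∪{α}⟩ψ under NC semantics, i.e., some ⪯_w^{Γ∪{α}}-minimal φ-world satisfies ψ. -/
open Set

/-- Minimal elements of `S` within domain `D` w.r.t. the strict part of `r`. -/
def minOnSet {W : Type*} (r : W → W → Prop) (D S : Set W) : Set W :=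
  {v | v ∈ S ∩ D ∧ ∀ u ∈ S ∩ D, ¬ (r u v ∧ ¬ r v u)}

/-
Adding `α` to the clause raises every agreement count by one exactly at the worlds agreeing with
`w` on `α`. A witness `u` of that polarity gains the full increment, so a world strictly below `u`
in the new order was already strictly below it in the old one, and `Γ`-minimality of `u` survives.
-/

theorem mem_minOnSet_of_imp {W : Type*} {r r' : W → W → Prop} {D S : Set W} {u : W}
    (hu : u ∈ minOnSet r D S) (hback : ∀ v, r' v u → r v u) (hforth : ∀ v, r u v → r' u v) :
    u ∈ minOnSet r' D S :=
  ⟨hu.1, fun v hv ⟨hvu, huv⟩ => hu.2 v hv ⟨hback v hvu, fun h => huv (hforth v h)⟩⟩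

section agreeSet

variable {W F : Type*} {sat : W → F → Prop} {w x : W} {α : F}

theorem agreeSet_insert_of_agree (Γ : Set F) (hx : sat x α ↔ sat w α) :
    agreeSet sat (insert α Γ) w x = insert α (agreeSet sat Γ w x) := by
  ext γ
  simp only [agreeSet, mem_ofPred_eq, mem_insert_iff]
  constructor
  · rintro ⟨rfl | hγ, hiff⟩
    exacts [Or.inl rfl, Or.inr ⟨hγ, hiff⟩]
  · rintro (rfl | ⟨hγ, hiff⟩)
    exacts [⟨Or.inl rfl, hx⟩, ⟨Or.inr hγ, hiff⟩]

theorem agreeSet_insert_of_not_agree (Γ : Set F) (hx : ¬(sat x α ↔ sat w α)) :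
    agreeSet sat (insert α Γ) w x = agreeSet sat Γ w x := by
  ext γ
  simp only [agreeSet, mem_ofPred_eq, mem_insert_iff]
  constructor
  · rintro ⟨rfl | hγ, hiff⟩
    exacts [absurd hiff hx, ⟨hγ, hiff⟩]
  · rintro ⟨hγ, hiff⟩
    exact ⟨Or.inr hγ, hiff⟩

variable [DecidableEq F] {Γ : Finset F}

theorem ncard_agreeSet_insert_of_agree (hα : α ∉ Γ) (hx : sat x α ↔ sat w α) :
    (agreeSet sat ↑(insert α Γ) w x).ncard = (agreeSet sat ↑Γ w x).ncard + 1 := by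
  rw [Finset.coe_insert, agreeSet_insert_of_agree _ hx,
    ncard_insert_of_notMem (fun h => hα h.1) (Γ.finite_toSet.subset fun _ h => h.1)]

theorem ncard_agreeSet_insert_of_not_agree (hx : ¬(sat x α ↔ sat w α)) :
    (agreeSet sat ↑(insert α Γ) w x).ncard = (agreeSet sat ↑Γ w x).ncard := by
  rw [Finset.coe_insert, agreeSet_insert_of_not_agree _ hx]

end agreeSet

section ncRel

variable {W F : Type*} [DecidableEq F] {sat : W → F → Prop} {Γ : Finset F} {α : F}
  {pre : W → W → Prop} {w u v : W}

theorem ncRel_of_ncRel_insert_of_agree (hα : α ∉ Γ) (hu : sat u α ↔ sat w α)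
    (hvu : ncRel sat (insert α Γ) pre w v u) : ncRel sat Γ pre w v u := by
  have hcu := ncard_agreeSet_insert_of_agree hα hu
  unfold ncRel at *
  by_cases hv : sat v α ↔ sat w α
  · have hcv := ncard_agreeSet_insert_of_agree hα hv
    rcases hvu with hlt | ⟨heq, hpre⟩
    exacts [Or.inl (by omega), Or.inr ⟨by omega, hpre⟩]
  · have hcv := ncard_agreeSet_insert_of_not_agree (Γ := Γ) hv
    rcases hvu with hlt | ⟨heq, -⟩ <;> exact Or.inl (by omega)

theorem ncRel_insert_of_ncRel_of_agree (hα : α ∉ Γ) (hu : sat u α ↔ sat w α)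
    (huv : ncRel sat Γ pre w u v) : ncRel sat (insert α Γ) pre w u v := by
  have hcu := ncard_agreeSet_insert_of_agree hα hu
  unfold ncRel at *
  by_cases hv : sat v α ↔ sat w α
  · have hcv := ncard_agreeSet_insert_of_agree hα hv
    rcases huv with hlt | ⟨heq, hpre⟩
    exacts [Or.inl (by omega), Or.inr ⟨by omega, hpre⟩]
  · have hcv := ncard_agreeSet_insert_of_not_agree (Γ := Γ) hv
    rcases huv with hlt | ⟨heq, -⟩ <;> exact Or.inl (by omega)

end ncRel

theorem nc_clause_extension_general {W F : Type*} [DecidableEq F] (sat : W → F → Prop)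
    (Γ : Finset F) (α : F) (Ww : Set W) (pre : W → W → Prop) (w : W) (P Q : Set W)
    (h : ∃ u ∈ minOnSet (ncRel sat Γ pre w) Ww P, u ∈ Q ∧ (sat u α ↔ sat w α)) :
    ∃ v ∈ minOnSet (ncRel sat (insert α Γ) pre w) Ww P, v ∈ Q := by
  obtain ⟨u, hmin, huQ, huα⟩ := h
  refine ⟨u, ?_, huQ⟩
  by_cases hαΓ : α ∈ Γ
  · rwa [Finset.insert_eq_self.mpr hαΓ]
  · exact mem_minOnSet_of_imp hmin (fun _ => ncRel_of_ncRel_insert_of_agree hαΓ huα)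
      (fun _ => ncRel_insert_of_ncRel_of_agree hαΓ huα)

theorem nc_clause_extension {W F : Type*} [DecidableEq F] (sat : W → F → Prop)
    (Γ : Finset F) (α : F) (Ww : Set W) (pre : W → W → Prop) (w : W) (P Q : Set W)
    (hrefl : ∀ u ∈ Ww, pre u u)
    (htrans : ∀ u ∈ Ww, ∀ v ∈ Ww, ∀ x ∈ Ww, pre u v → pre v x → pre u x)
    (htot : ∀ u ∈ Ww, ∀ v ∈ Ww, pre u v ∨ pre v u)
    (hwf : ∀ S : Set W, S ⊆ Ww → S.Nonempty →
      ∃ v ∈ S, ∀ u ∈ S, ¬ (pre u v ∧ ¬ pre v u))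
    (h : ∃ u ∈ minOnSet (ncRel sat Γ pre w) Ww P, u ∈ Q ∧ (sat u α ↔ sat w α)) :
    ∃ v ∈ minOnSet (ncRel sat (insert α Γ) pre w) Ww P, v ∈ Q :=
  nc_clause_extension_general sat Γ α Ww pre w P Q h
end

section
/- In the Fine model, the plain counterfactual p □→ h is false at w, but the ceteris paribus counterfactual [p, {m}]h under CP semantics is true at w. -/
open Set

inductive FW : Type
  | w : FW
  | u1 : FW
  | v1 : FW
  deriving DecidableEq

inductive FP : Type
  | p : FP
  | s : FP
  | m : FP
  | h : FP
  deriving DecidableEq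

/-- Valuation of the Fine model: `u1 ⊨ p,s,h`; `v1 ⊨ p,m`; `w` satisfies nothing. -/
def fsat : FW → FP → Prop
  | FW.u1, FP.p => True
  | FW.u1, FP.s => True
  | FW.u1, FP.h => True
  | FW.v1, FP.p => True
  | FW.v1, FP.m => True
  | _, _ => False

/-- Similarity rank from `w`: `w` most similar, then `v1`, then `u1`. -/
def frank : FW → ℕ
  | FW.w => 0
  | FW.v1 => 1
  | FW.u1 => 2

/-- The similarity order `⪯_w` of the Fine model. -/
def fpre (a b : FW) : Prop := frank a ≤ frank b

/-!
The closest `p`-world to `w` is `v1`, which falsifies `h`, so `p □→ h` fails. Holding `m` fixed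
discards `v1` (it satisfies `m`, while `w` does not), and the only remaining `p`-world is `u1`,
which satisfies `h`.
-/

section MinOnRel

variable {W : Type*} {r : W → W → Prop} {D S : Set W}

theorem minOnRel_subset_inter : minOnRel r D S ⊆ S ∩ D := fun _ hv => hv.1

theorem mem_minOnRel_of_forall_rel {v : W} (hv : v ∈ S ∩ D) (hle : ∀ u ∈ S ∩ D, r v u) :
    v ∈ minOnRel r D S :=
  ⟨hv, fun u hu hlt => hlt.2 (hle u hu)⟩

end MinOnRel

theorem mem_cpCls_singleton {W F : Type*} {sat : W → F → Prop} {γ : F} {Ww : Set W} {w u : W} :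
    u ∈ cpCls sat {γ} Ww w ↔ u ∈ Ww ∧ (sat u γ ↔ sat w γ) := by
  simp [cpCls]

theorem fpre_v1_of_fsat_p {u : FW} (hu : fsat u FP.p) : fpre FW.v1 u := by
  cases u <;> simp_all [fpre, frank, fsat]

theorem v1_mem_minOnRel_fpre : FW.v1 ∈ minOnRel fpre Set.univ {x | fsat x FP.p} :=
  mem_minOnRel_of_forall_rel ⟨trivial, trivial⟩ fun _ hu => fpre_v1_of_fsat_p hu.1

theorem fsat_p_inter_cpCls_m :
    {x | fsat x FP.p} ∩ cpCls fsat {FP.m} Set.univ FW.w = {FW.u1} := by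
  ext x
  cases x <;> simp [mem_cpCls_singleton, fsat]

theorem fine_model_nixon :
    ¬ (minOnRel fpre Set.univ {x | fsat x FP.p} ⊆ {x | fsat x FP.h}) ∧
    (minOnRel (cpRel fsat {FP.m} Set.univ fpre FW.w) (cpCls fsat {FP.m} Set.univ FW.w)
        {x | fsat x FP.p} ⊆ {x | fsat x FP.h}) := by
  refine ⟨fun hsub => (hsub v1_mem_minOnRel_fpre : fsat FW.v1 FP.h), ?_⟩
  calc minOnRel _ _ {x | fsat x FP.p}
      ⊆ {x | fsat x FP.p} ∩ cpCls fsat {FP.m} Set.univ FW.w := minOnRel_subset_inter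
    _ = {FW.u1} := fsat_p_inter_cpCls_m
    _ ⊆ {x | fsat x FP.h} := by simp [fsat]
end
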